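/- (Sturm Oscillation Theorem) Let V : ℝ → ℝ be bounded and continuous, a > 0, and E a real number. Then the set of Dirichlet eigenvalues of −d²/dx² + V on [0,a] that are strictly less than E is finite, the set of zeros of u(·,E) in (0,a) is finite, and the two sets have the same cardinality: #{E′ < E : E′ is a Dirichlet eigenvalue on [0,a]} = #{x ∈ (0,a) : u(x,E) = 0}. -/

import Mathlib

/-!
Prüfer transformation: a solution with `u 0 = 0` is written `u = ρ sin θ`, `u' = ρ cos θ`, where
the angle solves `θ' = cos² θ + (E - V) sin² θ`, `θ 0 = 0`. At `θ ∈ πℤ` the right-hand side is `1`,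
so `θ` crosses every multiple of `π` exactly once, upwards; hence the zeros of `u(·,E)` in `(0,a)`
correspond to the multiples of `π` in `(0, θ_E a)`. `E` is a Dirichlet eigenvalue iff
`θ_E a ∈ πℤ`, and `E ↦ θ_E a` is continuous, strictly increasing (comparison of the angle
equations) and below `π/2` for `E < inf V`; so by the intermediate value theorem the eigenvalues
below `E` correspond to the same multiples of `π`.
-/

open Set

/-- `E` is a Dirichlet eigenvalue of `−d²/dx² + V` on `[0,a]`: there is a not-identically-zero
solution of `−u″ + Vu = Eu` on `[0,a]` with `u(0) = u(a) = 0`. -/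
def IsDirichletEigenvalue (V : ℝ → ℝ) (a E : ℝ) : Prop :=
  ∃ u : ℝ → ℝ, ContDiff ℝ 2 u ∧
    (∀ x ∈ Set.Icc 0 a, deriv (deriv u) x = (V x - E) * u x) ∧
    (∃ x ∈ Set.Icc 0 a, u x ≠ 0) ∧ u 0 = 0 ∧ u a = 0

open Real Filter Topology
open scoped NNReal

theorem exists_forall_hasDerivAt_of_lipschitzWith {E : Type*} [NormedAddCommGroup E]
    [NormedSpace ℝ E] [CompleteSpace E] {v : ℝ → E → E} {K L : ℝ≥0}
    (hv : ∀ t, LipschitzWith K (v t)) (hcont : ∀ x, Continuous (v · x))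
    (hbdd : ∀ t x, ‖v t x‖ ≤ L) (x₀ : E) :
    ∃ α : ℝ → E, α 0 = x₀ ∧ ∀ t, HasDerivAt α (v t (α t)) t := by
  have hloc (n : ℕ) :
      ∃ α : ℝ → E, α 0 = x₀ ∧ ∀ t ∈ Ioo (-n : ℝ) n, HasDerivAt α (v t (α t)) t := by
    have h0 : (0 : ℝ) ∈ Icc (-n : ℝ) n := ⟨by simp, by simp⟩
    have hpl : IsPicardLindelof v (⟨0, h0⟩ : Icc (-n : ℝ) n) x₀ (L * n) 0 L K :=
      { lipschitzOnWith := fun t _ => (hv t).lipschitzOnWith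
        continuousOn := fun x _ => (hcont x).continuousOn
        norm_le := fun t _ x _ => hbdd t x
        mul_max_le := by simp }
    obtain ⟨α, hα0, hα⟩ := hpl.exists_eq_forall_mem_Icc_hasDerivWithinAt₀
    exact ⟨α, hα0, fun t ht => (hα t (Ioo_subset_Icc_self ht)).hasDerivAt (Icc_mem_nhds ht.1 ht.2)⟩
  choose α hα0 hα using hloc
  have hagree (m n : ℕ) (t : ℝ) (hm : t ∈ Ioo (-m : ℝ) m) (hn : t ∈ Ioo (-n : ℝ) n) :
      α m t = α n t := by
    wlog hmn : m ≤ n generalizing m n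
    · exact (this n m hn hm (le_of_not_ge hmn)).symm
    have hsub : Ioo (-m : ℝ) m ⊆ Ioo (-n : ℝ) n :=
      Ioo_subset_Ioo (by simp [hmn]) (by simp [hmn])
    exact ODE_solution_unique_of_mem_Ioo (s := fun _ => univ) (t₀ := 0)
      (fun t _ => (hv t).lipschitzOnWith) ⟨by linarith [hm.1, hm.2], by linarith [hm.1, hm.2]⟩
      (fun t ht => ⟨hα m t ht, trivial⟩) (fun t ht => ⟨hα n t (hsub ht), trivial⟩)
      (by rw [hα0, hα0]) hm
  have hmem (t : ℝ) : t ∈ Ioo (-(⌊|t|⌋₊ + 1 : ℕ) : ℝ) (⌊|t|⌋₊ + 1 : ℕ) := by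
    push_cast
    exact abs_lt.mp (Nat.lt_floor_add_one |t|)
  refine ⟨fun t => α (⌊|t|⌋₊ + 1) t, hα0 _, fun t => (hα _ t (hmem t)).congr_of_eventuallyEq ?_⟩
  filter_upwards [isOpen_Ioo.mem_nhds (hmem t)] with s hs
  exact hagree _ _ s (hmem s) hs

theorem lt_of_deriv_pos_on_level_set {f f' : ℝ → ℝ} {y c x : ℝ}
    (hf : ∀ t, HasDerivAt f (f' t) t) (hy : ∀ t, f t = y → 0 < f' t) (hc : y ≤ f c)
    (hcx : c < x) : y < f x := by
  have hfc : Continuous f := continuous_iff_continuousAt.2 fun t => (hf t).continuousAt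
  have hge : ∀ t ∈ Icc c (x + 1), y ≤ f t := fun t ht => by
    have := image_le_of_deriv_right_lt_deriv_boundary' (f := fun t => -f t)
      (B := fun _ => -y) (B' := fun _ => 0) hfc.neg.continuousOn
      (fun t _ => (hf t).neg.hasDerivWithinAt) (neg_le_neg hc) continuousOn_const
      (fun t _ => hasDerivWithinAt_const _ _ _) (fun t _ h => by linarith [hy t (neg_inj.mp h)]) ht
    linarith
  refine (hge x ⟨hcx.le, by linarith⟩).lt_of_ne fun hfx => (hy x hfx.symm).ne' ?_
  refine IsLocalMin.hasDerivAt_eq_zero ?_ (hf x)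
  filter_upwards [Ioo_mem_nhds hcx (lt_add_one x)] with t ht
  exact hfx ▸ hge t (Ioo_subset_Icc_self ht)

theorem contDiff_two_of_hasDerivAt {f f' f'' : ℝ → ℝ} (hf : ∀ x, HasDerivAt f (f' x) x)
    (hf' : ∀ x, HasDerivAt f' (f'' x) x) (hf'' : Continuous f'') : ContDiff ℝ 2 f := by
  have hd : deriv f = f' := funext fun x => (hf x).deriv
  have hd' : deriv f' = f'' := funext fun x => (hf' x).deriv
  rw [show (2 : WithTop ℕ∞) = 1 + 1 from rfl, contDiff_succ_iff_deriv, hd, contDiff_one_iff_deriv,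
    hd']
  exact ⟨fun x => (hf x).differentiableAt, by simp, fun x => (hf' x).differentiableAt, hf''⟩

theorem ODE_comparison {v : ℝ → ℝ → ℝ} {K : ℝ≥0} {f f' g g' : ℝ → ℝ} {a b : ℝ}
    (hv : ∀ t ∈ Ico a b, LipschitzWith K (v t))
    (hf : ContinuousOn f (Icc a b)) (hf' : ∀ t ∈ Ico a b, HasDerivWithinAt f (f' t) (Ici t) t)
    (hg : ContinuousOn g (Icc a b)) (hg' : ∀ t ∈ Ico a b, HasDerivWithinAt g (g' t) (Ici t) t)
    (hfv : ∀ t ∈ Ico a b, f' t ≤ v t (f t)) (hgv : ∀ t ∈ Ico a b, v t (g t) ≤ g' t)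
    (ha : f a ≤ g a) :
    ∀ t ∈ Icc a b, f t + (g a - f a) * exp (-K * (t - a)) ≤ g t := by
  intro t ht
  set δ := g a - f a
  have hexp (c s : ℝ) : HasDerivAt (fun s => exp (c * (s - a))) (c * exp (c * (s - a))) s := by
    simpa [mul_comm] using (((hasDerivAt_id s).sub_const a).const_mul c).exp
  -- the `ε`-term makes the fence strict
  have hfence (ε : ℝ) (hε : 0 < ε) :
      f t ≤ g t - δ * exp (-K * (t - a)) + ε * exp ((K + 1) * (t - a)) := by
    refine image_le_of_deriv_right_lt_deriv_boundary' hf hf'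
      (B' := fun s =>
        g' s - δ * (-K * exp (-K * (s - a))) + ε * ((K + 1) * exp ((K + 1) * (s - a))))
      (by simp [δ]; linarith) (by fun_prop)
      (fun s hs => (((hg' s hs).sub ((hexp _ s).hasDerivWithinAt.const_mul δ)).add
        ((hexp _ s).hasDerivWithinAt.const_mul ε))) (fun s hs hfs => ?_) ht
    simp only [Pi.add_apply, Pi.sub_apply] at hfs
    have hlip := (hv s hs).dist_le_mul (f s) (g s)
    rw [dist_eq_norm, dist_eq_norm, Real.norm_eq_abs, Real.norm_eq_abs] at hlip
    have h1 : 0 < ε * exp ((K + 1) * (s - a)) := mul_pos hε (exp_pos _)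
    have h2 : 0 ≤ δ * exp (-K * (s - a)) := mul_nonneg (by linarith) (exp_pos _).le
    have h3 : |f s - g s| ≤ δ * exp (-K * (s - a)) + ε * exp ((K + 1) * (s - a)) := by
      rw [abs_le]; constructor <;> linarith
    linarith [hfv s hs, hgv s hs, mul_le_mul_of_nonneg_left h3 K.coe_nonneg,
      le_abs_self (v s (f s) - v s (g s))]
  refine le_of_forall_pos_le_add fun η hη => ?_
  have := hfence (η / exp ((K + 1) * (t - a))) (div_pos hη (exp_pos _))
  rw [div_mul_cancel₀ _ (exp_pos _).ne'] at this
  linarith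

theorem eqOn_Icc_of_deriv_deriv_eq_mul {q u w : ℝ → ℝ} {a b : ℝ} (hq : ContinuousOn q (Icc a b))
    (hu : ContDiff ℝ 2 u) (hw : ContDiff ℝ 2 w)
    (hu'' : ∀ x ∈ Ico a b, deriv (deriv u) x = q x * u x)
    (hw'' : ∀ x ∈ Ico a b, deriv (deriv w) x = q x * w x)
    (h₀ : u a = w a) (h₁ : deriv u a = deriv w a) : EqOn u w (Icc a b) := by
  obtain ⟨C, hC⟩ := isCompact_Icc.exists_bound_of_continuousOn hq
  set G : ℝ → ℝ × ℝ → ℝ × ℝ := fun t z => (z.2, q t * z.1)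
  have hG : ∀ t ∈ Ico a b, LipschitzOnWith (max 1 C.toNNReal) (G t) univ := by
    intro t ht
    have hqt : ‖q t‖₊ * 1 ≤ C.toNNReal := by
      rw [mul_one, ← NNReal.coe_le_coe, coe_nnnorm]
      exact (hC t (Ico_subset_Icc_self ht)).trans (le_coe_toNNReal C)
    exact ((LipschitzWith.prod_snd.prodMk ((lipschitzWith_smul (q t)).comp
      LipschitzWith.prod_fst)).weaken (max_le_max le_rfl hqt)).lipschitzOnWith
  have hphase {y : ℝ → ℝ} (hy : ContDiff ℝ 2 y)
      (hy'' : ∀ x ∈ Ico a b, deriv (deriv y) x = q x * y x) (t : ℝ) (ht : t ∈ Ico a b) :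
      HasDerivWithinAt (fun t => (y t, deriv y t)) (G t (y t, deriv y t)) (Ici t) t := by
    have := ((hy.differentiable (by norm_num) t).hasDerivAt.prodMk
      (hy.differentiable_deriv_two t).hasDerivAt).hasDerivWithinAt (s := Ici t)
    rwa [hy'' t ht] at this
  have hcont {y : ℝ → ℝ} (hy : ContDiff ℝ 2 y) :
      ContinuousOn (fun t => (y t, deriv y t)) (Icc a b) :=
    (hy.continuous.prodMk (hy.continuous_deriv (by norm_num))).continuousOn
  intro x hx
  exact congrArg Prod.fst (ODE_solution_unique_of_mem_Icc_right hG (hcont hu) (hphase hu hu'')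
    (fun _ _ => mem_univ _) (hcont hw) (hphase hw hw'') (fun _ _ => mem_univ _)
    (by rw [h₀, h₁]) hx)

theorem finite_sep_Ioo_sin_eq_zero (T : ℝ) : {y ∈ Ioo 0 T | sin y = 0}.Finite := by
  refine ((finite_Icc (0 : ℤ) ⌈T / π⌉).image fun k : ℤ => (k : ℝ) * π).subset ?_
  rintro y ⟨hy, hsin⟩
  obtain ⟨k, rfl⟩ := sin_eq_zero_iff.1 hsin
  refine ⟨k, ⟨?_, ?_⟩, rfl⟩
  · exact_mod_cast (pos_of_mul_pos_left hy.1 pi_pos.le).le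
  · have : (k : ℝ) ≤ T / π := (le_div_iff₀ pi_pos).2 hy.2.le
    exact_mod_cast this.trans (Int.le_ceil _)

noncomputable section

namespace Prufer

variable {V : ℝ → ℝ} {M E E₁ E₂ a : ℝ} {θ θ₁ θ₂ : ℝ → ℝ}

def field (V : ℝ → ℝ) (E x y : ℝ) : ℝ := cos y ^ 2 + (E - V x) * sin y ^ 2

theorem field_int_mul_pi (V : ℝ → ℝ) (E x : ℝ) (k : ℤ) : field V E x (k * π) = 1 := by
  simp [field, cos_sq', sin_int_mul_pi]

theorem field_pi_div_two (V : ℝ → ℝ) (E x : ℝ) : field V E x (π / 2) = E - V x := by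
  simp [field]

theorem field_sub_field (V : ℝ → ℝ) (E₁ E₂ x y : ℝ) :
    field V E₂ x y - field V E₁ x y = (E₂ - E₁) * sin y ^ 2 := by
  unfold field; ring

theorem abs_field_le (hM : ∀ x, |V x| ≤ M) (E x y : ℝ) : |field V E x y| ≤ |E| + M + 1 := by
  have hEV : |E - V x| ≤ |E| + M := (abs_sub _ _).trans (by linarith [hM x])
  calc |field V E x y| ≤ cos y ^ 2 + |E - V x| * sin y ^ 2 := by
        refine (abs_add_le _ _).trans_eq ?_
        simp only [abs_mul, abs_pow, sq_abs]
    _ ≤ |E| + M + 1 := by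
        nlinarith [sin_sq_add_cos_sq y, sq_nonneg (sin y), sq_nonneg (cos y), abs_nonneg (E - V x)]

theorem lipschitzWith_field (hM : ∀ x, |V x| ≤ M) (E x : ℝ) :
    LipschitzWith (|E| + M + 1).toNNReal (field V E x) := by
  have hderiv (y : ℝ) : HasDerivAt (field V E x) ((E - V x - 1) * sin (2 * y)) y := by
    have h : HasDerivAt (fun y => cos y ^ 2 + (E - V x) * sin y ^ 2)
        (2 * cos y ^ 1 * -sin y + (E - V x) * (2 * sin y ^ 1 * cos y)) y :=
      ((hasDerivAt_cos y).pow 2).add (((hasDerivAt_sin y).pow 2).const_mul (E - V x))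
    exact h.congr_deriv (by rw [sin_two_mul]; ring)
  refine lipschitzWith_of_nnnorm_deriv_le (fun y => (hderiv y).differentiableAt) fun y => ?_
  rw [(hderiv y).deriv, ← NNReal.coe_le_coe, coe_nnnorm, Real.norm_eq_abs, abs_mul]
  refine (mul_le_of_le_one_right (abs_nonneg _) (abs_sin_le_one _)).trans ?_
  have h : |E - V x - 1| ≤ |E| + M + 1 := by
    linarith [hM x, abs_sub E (V x), abs_sub (E - V x) 1, abs_one (α := ℝ)]
  rwa [Real.coe_toNNReal _ ((abs_nonneg _).trans h)]

structure IsAngle (V : ℝ → ℝ) (E : ℝ) (θ : ℝ → ℝ) : Prop where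
  zero : θ 0 = 0
  hasDerivAt : ∀ x, HasDerivAt θ (field V E x (θ x)) x

theorem exists_isAngle (hM : ∀ x, |V x| ≤ M) (hV : Continuous V) (E : ℝ) :
    ∃ θ, IsAngle V E θ := by
  obtain ⟨θ, h0, hθ⟩ := exists_forall_hasDerivAt_of_lipschitzWith
    (lipschitzWith_field hM E) (fun y => by unfold field; fun_prop)
    (L := (|E| + M + 1).toNNReal)
    (fun x y => (Real.norm_eq_abs _).trans_le ((abs_field_le hM E x y).trans (le_coe_toNNReal _))) 0
  exact ⟨θ, h0, hθ⟩

namespace IsAngle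

theorem continuous (hθ : IsAngle V E θ) : Continuous θ :=
  continuous_iff_continuousAt.2 fun x => (hθ.hasDerivAt x).continuousAt

theorem int_mul_pi_lt (hθ : IsAngle V E θ) {k : ℤ} {c x : ℝ} (hc : θ c = k * π) (hcx : c < x) :
    k * π < θ x :=
  lt_of_deriv_pos_on_level_set hθ.hasDerivAt
    (fun t ht => by rw [ht, field_int_mul_pi]; exact one_pos) hc.ge hcx

theorem pos (hθ : IsAngle V E θ) {x : ℝ} (hx : 0 < x) : 0 < θ x := by
  simpa using hθ.int_mul_pi_lt (k := 0) (by simp [hθ.zero]) hx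

theorem lt_pi_div_two (hθ : IsAngle V E θ) (hE : ∀ x, E < V x) {x : ℝ} (hx : 0 < x) :
    θ x < π / 2 := by
  have := lt_of_deriv_pos_on_level_set (f := fun t => -θ t) (y := -(π / 2))
    (fun t => (hθ.hasDerivAt t).neg)
    (fun t ht => by rw [neg_inj.mp ht, field_pi_div_two]; linarith [hE t])
    (by simp [hθ.zero]; positivity) hx
  linarith

theorem eventually_sin_pos (hθ : IsAngle V E θ) : ∀ᶠ x in 𝓝[>] 0, 0 < sin (θ x) := by
  have hπ : ∀ᶠ x in 𝓝[>] 0, θ x < π :=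
    (hθ.continuous.tendsto' 0 0 hθ.zero).mono_left nhdsWithin_le_nhds |>.eventually
      (gt_mem_nhds pi_pos)
  filter_upwards [self_mem_nhdsWithin, hπ] with x hx hxπ
  exact sin_pos_of_pos_of_lt_pi (hθ.pos hx) hxπ

theorem bijOn_zeros (hθ : IsAngle V E θ) (ha : 0 ≤ a) :
    BijOn θ {x ∈ Ioo 0 a | sin (θ x) = 0} {y ∈ Ioo 0 (θ a) | sin y = 0} := by
  refine ⟨fun x ⟨hx, hsin⟩ => ⟨⟨hθ.pos hx.1, ?_⟩, hsin⟩, fun x₁ ⟨_, h₁⟩ x₂ ⟨_, h₂⟩ heq => ?_,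
    fun y ⟨hy, hsin⟩ => ?_⟩
  · obtain ⟨k, hk⟩ := sin_eq_zero_iff.mp hsin
    exact hk ▸ hθ.int_mul_pi_lt hk.symm hx.2
  · obtain ⟨k, hk⟩ := sin_eq_zero_iff.mp h₁
    by_contra hne
    rcases lt_or_gt_of_ne hne with h | h
    · exact (hθ.int_mul_pi_lt hk.symm h).ne (hk.trans heq)
    · exact (hθ.int_mul_pi_lt (heq.symm.trans hk.symm) h).ne hk
  · obtain ⟨x, hx, rfl⟩ := intermediate_value_Ioo ha hθ.continuous.continuousOn
      (by rwa [hθ.zero])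
    exact ⟨x, ⟨hx, hsin⟩, rfl⟩

theorem add_mul_exp_le (hM : ∀ x, |V x| ≤ M) (h₁ : IsAngle V E₁ θ₁) (h₂ : IsAngle V E₂ θ₂)
    (hE : E₁ ≤ E₂) {c x : ℝ} (hc : θ₁ c ≤ θ₂ c) (hcx : c ≤ x) :
    θ₁ x + (θ₂ c - θ₁ c) * exp (-(|E₁| + M + 1).toNNReal * (x - c)) ≤ θ₂ x :=
  ODE_comparison (fun t _ => lipschitzWith_field hM E₁ t) h₁.continuous.continuousOn
    (fun t _ => (h₁.hasDerivAt t).hasDerivWithinAt) h₂.continuous.continuousOn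
    (fun t _ => (h₂.hasDerivAt t).hasDerivWithinAt) (fun _ _ => le_rfl)
    (fun t _ => sub_nonneg.1 <|
      field_sub_field V E₁ E₂ t (θ₂ t) ▸ mul_nonneg (sub_nonneg.2 hE) (sq_nonneg _))
    hc x ⟨hcx, le_rfl⟩

theorem le_of_energy_le (hM : ∀ x, |V x| ≤ M) (h₁ : IsAngle V E₁ θ₁) (h₂ : IsAngle V E₂ θ₂)
    (hE : E₁ ≤ E₂) {x : ℝ} (hx : 0 ≤ x) : θ₁ x ≤ θ₂ x := by
  simpa [h₁.zero, h₂.zero] using h₁.add_mul_exp_le hM h₂ hE (by rw [h₁.zero, h₂.zero]) hx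

theorem lt_of_energy_lt (hM : ∀ x, |V x| ≤ M) (h₁ : IsAngle V E₁ θ₁) (h₂ : IsAngle V E₂ θ₂)
    (hE : E₁ < E₂) {x : ℝ} (hx : 0 < x) : θ₁ x < θ₂ x := by
  obtain ⟨c, hsin, hc0, hcx⟩ := (h₂.eventually_sin_pos.and (Ioo_mem_nhdsGT hx)).exists
  have hc : θ₁ c < θ₂ c := by
    refine (h₁.le_of_energy_le hM h₂ hE.le hc0.le).lt_of_ne fun heq => ?_
    -- `θ₂ - θ₁ ≥ 0` has a local minimum at `c`, where its derivative is `(E₂ - E₁) sin² (θ₂ c)`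
    have hmin : IsLocalMin (fun t => θ₂ t - θ₁ t) c := by
      filter_upwards [Ioi_mem_nhds hc0] with t ht
      simpa [heq] using h₁.le_of_energy_le hM h₂ hE.le (le_of_lt ht)
    have hderiv := hmin.hasDerivAt_eq_zero ((h₂.hasDerivAt c).sub (h₁.hasDerivAt c))
    rw [heq, field_sub_field] at hderiv
    have : 0 < (E₂ - E₁) * sin (θ₂ c) ^ 2 := mul_pos (sub_pos.2 hE) (pow_pos hsin 2)
    linarith
  have := h₁.add_mul_exp_le hM h₂ hE.le hc.le hcx.le
  linarith [mul_pos (sub_pos.2 hc) (exp_pos (-(|E₁| + M + 1).toNNReal * (x - c)))]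

theorem dist_le_gronwallBound (hM : ∀ x, |V x| ≤ M) (h₁ : IsAngle V E₁ θ₁)
    (h₂ : IsAngle V E₂ θ₂) {x : ℝ} (hx : 0 ≤ x) :
    dist (θ₂ x) (θ₁ x) ≤ gronwallBound 0 (|E₁| + M + 1).toNNReal |E₂ - E₁| x := by
  have hbound (t : ℝ) : dist (field V E₂ t (θ₂ t)) (field V E₁ t (θ₂ t)) ≤ |E₂ - E₁| := by
    rw [dist_eq_norm, Real.norm_eq_abs, field_sub_field, abs_mul, abs_pow]
    exact mul_le_of_le_one_right (abs_nonneg _) (pow_le_one₀ (abs_nonneg _) (abs_sin_le_one _))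
  simpa using dist_le_of_approx_trajectories_ODE (lipschitzWith_field hM E₁)
    h₂.continuous.continuousOn (fun t _ => (h₂.hasDerivAt t).hasDerivWithinAt)
    (fun t _ => hbound t) h₁.continuous.continuousOn
    (fun t _ => (h₁.hasDerivAt t).hasDerivWithinAt) (fun t _ => (dist_self _).le)
    (by rw [h₁.zero, h₂.zero, dist_self]) x ⟨hx, le_rfl⟩

end IsAngle

theorem continuous_apply_of_isAngle (hM : ∀ x, |V x| ≤ M) {Θ : ℝ → ℝ → ℝ}
    (hΘ : ∀ E, IsAngle V E (Θ E)) {x : ℝ} (hx : 0 ≤ x) : Continuous fun E => Θ E x := by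
  refine continuous_iff_continuousAt.2 fun E₁ => tendsto_iff_dist_tendsto_zero.2 ?_
  have hlim :
      Tendsto (fun E => gronwallBound 0 (|E₁| + M + 1).toNNReal |E - E₁| x) (𝓝 E₁) (𝓝 0) := by
    have := ((gronwallBound_continuous_ε 0 (|E₁| + M + 1).toNNReal x).comp
      (continuous_id.sub (continuous_const (y := E₁))).abs).tendsto E₁
    simpa [Function.comp_def, gronwallBound_ε0_δ0] using this
  exact squeeze_zero (fun _ => dist_nonneg)
    (fun E => (hΘ E₁).dist_le_gronwallBound hM (hΘ E) hx) hlim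

theorem strictMono_apply_of_isAngle (hM : ∀ x, |V x| ≤ M) {Θ : ℝ → ℝ → ℝ}
    (hΘ : ∀ E, IsAngle V E (Θ E)) {x : ℝ} (hx : 0 < x) : StrictMono fun E => Θ E x :=
  fun _ _ hE => (hΘ _).lt_of_energy_lt hM (hΘ _) hE hx

/-- With this amplitude `ρ`, `ρ sin θ` solves `-u'' + Vu = Eu` and has derivative `ρ cos θ`. -/
def amplitude (V : ℝ → ℝ) (E : ℝ) (θ : ℝ → ℝ) (x : ℝ) : ℝ :=
  exp (∫ t in (0 : ℝ)..x, (1 + V t - E) * sin (θ t) * cos (θ t))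

def solution (V : ℝ → ℝ) (E : ℝ) (θ : ℝ → ℝ) (x : ℝ) : ℝ := amplitude V E θ x * sin (θ x)

theorem amplitude_pos (V : ℝ → ℝ) (E : ℝ) (θ : ℝ → ℝ) (x : ℝ) : 0 < amplitude V E θ x :=
  exp_pos _

theorem solution_eq_zero_iff {x : ℝ} : solution V E θ x = 0 ↔ sin (θ x) = 0 := by
  simp [solution, (amplitude_pos V E θ x).ne']

namespace IsAngle

theorem hasDerivAt_amplitude (hθ : IsAngle V E θ) (hV : Continuous V) (x : ℝ) :
    HasDerivAt (amplitude V E θ)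
      (amplitude V E θ x * ((1 + V x - E) * sin (θ x) * cos (θ x))) x := by
  have hcont : Continuous fun t => (1 + V t - E) * sin (θ t) * cos (θ t) := by
    have := hθ.continuous; fun_prop
  exact ((hcont.integral_hasStrictDerivAt 0 x).hasDerivAt).exp

theorem hasDerivAt_solution (hθ : IsAngle V E θ) (hV : Continuous V) (x : ℝ) :
    HasDerivAt (solution V E θ) (amplitude V E θ x * cos (θ x)) x := by
  have h := (hθ.hasDerivAt_amplitude hV x).mul ((hasDerivAt_sin (θ x)).comp x (hθ.hasDerivAt x))
  refine h.congr_deriv ?_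
  simp only [field, Function.comp_apply]
  linear_combination amplitude V E θ x * cos (θ x) * sin_sq_add_cos_sq (θ x)

theorem hasDerivAt_amplitude_mul_cos (hθ : IsAngle V E θ) (hV : Continuous V) (x : ℝ) :
    HasDerivAt (fun x => amplitude V E θ x * cos (θ x)) ((V x - E) * solution V E θ x) x := by
  have h := (hθ.hasDerivAt_amplitude hV x).mul ((hasDerivAt_cos (θ x)).comp x (hθ.hasDerivAt x))
  refine h.congr_deriv ?_
  simp only [field, solution, Function.comp_apply]
  linear_combination (V x - E) * amplitude V E θ x * sin (θ x) * sin_sq_add_cos_sq (θ x)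

theorem contDiff_solution (hθ : IsAngle V E θ) (hV : Continuous V) :
    ContDiff ℝ 2 (solution V E θ) := by
  have hcont : Continuous (solution V E θ) :=
    continuous_iff_continuousAt.2 fun x => (hθ.hasDerivAt_solution hV x).continuousAt
  exact contDiff_two_of_hasDerivAt (hθ.hasDerivAt_solution hV) (hθ.hasDerivAt_amplitude_mul_cos hV)
    (by fun_prop)

theorem deriv_deriv_solution (hθ : IsAngle V E θ) (hV : Continuous V) (x : ℝ) :
    deriv (deriv (solution V E θ)) x = (V x - E) * solution V E θ x := by
  rw [funext fun x => (hθ.hasDerivAt_solution hV x).deriv]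
  exact (hθ.hasDerivAt_amplitude_mul_cos hV x).deriv

theorem eqOn_mul_solution (hθ : IsAngle V E θ) (hV : Continuous V) {u : ℝ → ℝ}
    (hu : ContDiff ℝ 2 u) (hode : ∀ x ∈ Ico 0 a, deriv (deriv u) x = (V x - E) * u x)
    (h0 : u 0 = 0) :
    EqOn u (fun x => deriv u 0 * solution V E θ x) (Icc 0 a) := by
  have hd : deriv (fun x => deriv u 0 * solution V E θ x) =
      fun x => deriv u 0 * deriv (solution V E θ) x := deriv_const_mul_field' _
  refine eqOn_Icc_of_deriv_deriv_eq_mul (q := fun x => V x - E) (by fun_prop) hu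
    (contDiff_const.mul (hθ.contDiff_solution hV)) hode (fun x _ => ?_) ?_ ?_
  · rw [hd, deriv_const_mul_field']
    beta_reduce
    rw [hθ.deriv_deriv_solution hV]; ring
  · simp [h0, solution, hθ.zero]
  · rw [hd]
    beta_reduce
    rw [(hθ.hasDerivAt_solution hV 0).deriv]; simp [hθ.zero, amplitude]

theorem isDirichletEigenvalue_iff (hθ : IsAngle V E θ) (hV : Continuous V) (ha : 0 < a) :
    IsDirichletEigenvalue V a E ↔ sin (θ a) = 0 := by
  constructor
  · rintro ⟨v, hv, hode, ⟨x, hx, hvx⟩, hv0, hva⟩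
    have heq := hθ.eqOn_mul_solution hV hv (fun x hx => hode x (Ico_subset_Icc_self hx)) hv0
    have hc : deriv v 0 ≠ 0 := fun hc => hvx (by simpa [hc] using heq hx)
    have := heq ⟨ha.le, le_rfl⟩
    rw [hva, eq_comm, mul_eq_zero] at this
    exact solution_eq_zero_iff.1 (this.resolve_left hc)
  · intro hsin
    obtain ⟨x, hsinx, hx0, hxa⟩ := (hθ.eventually_sin_pos.and (Ioo_mem_nhdsGT ha)).exists
    exact ⟨solution V E θ, hθ.contDiff_solution hV, fun x _ => hθ.deriv_deriv_solution hV x,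
      ⟨x, ⟨hx0.le, hxa.le⟩, fun h => hsinx.ne' (solution_eq_zero_iff.1 h)⟩,
      by simp [solution, hθ.zero], solution_eq_zero_iff.2 hsin⟩

end IsAngle

theorem bijOn_eigenvalues (hM : ∀ x, |V x| ≤ M) (hV : Continuous V) {Θ : ℝ → ℝ → ℝ}
    (hΘ : ∀ E, IsAngle V E (Θ E)) (ha : 0 < a) (E : ℝ) :
    BijOn (fun E' => Θ E' a) {E' | IsDirichletEigenvalue V a E' ∧ E' < E}
      {y ∈ Ioo 0 (Θ E a) | sin y = 0} := by
  refine ⟨fun E' ⟨hE', hlt⟩ => ⟨⟨(hΘ E').pos ha, (hΘ E').lt_of_energy_lt hM (hΘ E) hlt ha⟩,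
    ((hΘ E').isDirichletEigenvalue_iff hV ha).1 hE'⟩,
    (strictMono_apply_of_isAngle hM hΘ ha).injective.injOn, fun y ⟨hy, hsin⟩ => ?_⟩
  set E₀ := min E (-M - 1)
  have hE₀ : Θ E₀ a < y := by
    have hlow : ∀ x, E₀ < V x := fun x => by
      linarith [min_le_right E (-M - 1), (abs_le.1 (hM x)).1]
    have hπy : π ≤ y := le_of_not_gt fun h => (sin_pos_of_pos_of_lt_pi hy.1 h).ne' hsin
    linarith [(hΘ E₀).lt_pi_div_two hlow ha, pi_pos]
  obtain ⟨E', ⟨-, hE'⟩, hy'⟩ := intermediate_value_Ico (min_le_left E (-M - 1))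
    (continuous_apply_of_isAngle hM hΘ ha.le).continuousOn ⟨hE₀.le, hy.2⟩
  have hsin' : sin (Θ E' a) = 0 := by rwa [show Θ E' a = y from hy']
  exact ⟨E', ⟨((hΘ E').isDirichletEigenvalue_iff hV ha).2 hsin', hE'⟩, hy'⟩

end Prufer

end

theorem sturm_oscillation (V : ℝ → ℝ) (hVb : ∃ M, ∀ x, |V x| ≤ M) (hVc : Continuous V)
    (a : ℝ) (ha : 0 < a) (E : ℝ) (u : ℝ → ℝ) (hu : ContDiff ℝ 2 u)
    (hode : ∀ x, deriv (deriv u) x = (V x - E) * u x)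
    (h0 : u 0 = 0) (h0' : deriv u 0 = 1) :
    {E' : ℝ | IsDirichletEigenvalue V a E' ∧ E' < E}.Finite ∧
    {x ∈ Ioo 0 a | u x = 0}.Finite ∧
    {E' : ℝ | IsDirichletEigenvalue V a E' ∧ E' < E}.ncard =
      {x ∈ Ioo 0 a | u x = 0}.ncard := by
  obtain ⟨M, hM⟩ := hVb
  choose θ hθ using Prufer.exists_isAngle hM hVc
  have hu_eq : EqOn u (Prufer.solution V E (θ E)) (Icc 0 a) := by
    simpa [h0'] using (hθ E).eqOn_mul_solution hVc hu (fun x _ => hode x) h0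
  have hzeros : {x ∈ Ioo 0 a | u x = 0} = {x ∈ Ioo 0 a | sin (θ E x) = 0} :=
    sep_ext_iff.2 fun x hx => by rw [hu_eq (Ioo_subset_Icc_self hx), Prufer.solution_eq_zero_iff]
  have hZ := hzeros ▸ (hθ E).bijOn_zeros ha.le
  have hEig := Prufer.bijOn_eigenvalues hM hVc hθ ha E
  have hS := finite_sep_Ioo_sin_eq_zero (θ E a)
  exact ⟨hEig.finite_iff_finite.2 hS, hZ.finite_iff_finite.2 hS,
    hEig.ncard_eq.trans hZ.ncard_eq.symm⟩
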